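/- For any matrix B ∈ ℝ^{m×n} and any matrix C ∈ ℝ^{m×n} with rank(C) ≤ k, the largest singular value of the residual satisfies σ₁(B − C) ≥ σ_{k+1}(B). -/

import Mathlib

/-! Courant–Fischer, one direction. Let `λ₁ ≥ ⋯ ≥ λₙ` be the eigenvalues of `BᵀB`. Since
`ker C` has dimension at least `n - k` and fewer than `n - k` eigenvectors of `BᵀB` have
eigenvalue below `λ_{k+1}`, some nonzero `x ∈ ker C` is orthogonal to all of them. Then
`λ_{k+1} ‖x‖² ≤ ‖B x‖² = ‖(B - C) x‖² ≤ σ₁(B - C)² ‖x‖²`. -/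

theorem Matrix.isHermitian_transpose_mul_self {m n α : Type*} [Fintype m] [CommSemiring α]
    [StarRing α] [TrivialStar α] (A : Matrix m n α) : (A.transpose * A).IsHermitian := by
  simpa [Matrix.conjTranspose_eq_transpose_of_trivial] using
    Matrix.isHermitian_conjTranspose_mul_self A

/-- The `k`-th largest singular value (0-indexed, so `sv B k = σ_{k+1}(B)`), 0 if `k ≥ n`. -/
noncomputable def sv {m n : ℕ} (B : Matrix (Fin m) (Fin n) ℝ) (k : ℕ) : ℝ :=
  if h : k < n then
    Real.sqrt (((Matrix.isHermitian_transpose_mul_self B).eigenvalues ∘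
      Tuple.sort ((Matrix.isHermitian_transpose_mul_self B).eigenvalues)) (Fin.rev ⟨k, h⟩))
  else 0

open Matrix Finset Module

namespace Tuple

variable {α : Type*} [LinearOrder α] {n : ℕ}

theorem le_comp_sort_rev_zero (f : Fin n → α) (hn : 0 < n) (i : Fin n) :
    f i ≤ (f ∘ sort f) (Fin.rev ⟨0, hn⟩) := by
  conv_lhs => rw [← Equiv.apply_symm_apply (sort f) i]
  exact monotone_sort f (Fin.le_def.mpr (by simp only [Fin.val_rev]; omega))

theorem card_filter_lt_comp_sort_le (f : Fin n → α) (j : Fin n) :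
    #{i | f i < (f ∘ sort f) j} ≤ j := by
  calc #{i | f i < (f ∘ sort f) j}
      ≤ #((Iio j).map (sort f).toEmbedding) := by
        refine card_le_card fun i hi => ?_
        simp only [mem_filter, mem_univ, true_and] at hi
        refine mem_map_equiv.mpr (mem_Iio.mpr ?_)
        by_contra! h
        have := monotone_sort f h
        simp only [Function.comp_apply, Equiv.apply_symm_apply] at this
        exact absurd hi (not_lt.mpr this)
    _ = j := by simp

end Tuple

namespace Matrix

variable {ι : Type*} [Fintype ι]

theorem dotProduct_mulVec_transpose_mul_self {R : Type*} [CommSemiring R] {m : Type*} [Fintype m]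
    (M : Matrix m ι R) (x : ι → R) : x ⬝ᵥ (Mᵀ * M) *ᵥ x = (M *ᵥ x) ⬝ᵥ (M *ᵥ x) := by
  rw [← mulVec_mulVec, dotProduct_mulVec, vecMul_transpose]

theorem _root_.OrthonormalBasis.sum_sq_dotProduct (b : OrthonormalBasis ι ℝ (EuclideanSpace ℝ ι))
    (x : ι → ℝ) : ∑ i, (⇑(b i) ⬝ᵥ x) ^ 2 = x ⬝ᵥ x := by
  have := b.sum_inner_mul_inner (WithLp.toLp 2 x) (WithLp.toLp 2 x)
  simp only [EuclideanSpace.inner_eq_star_dotProduct, star_trivial] at this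
  simpa [sq, dotProduct_comm] using this

theorem rank_add_finrank_ker_mulVecLin {m K : Type*} [Field K] (C : Matrix m ι K) :
    C.rank + finrank K (LinearMap.ker C.mulVecLin) = Fintype.card ι :=
  (LinearMap.finrank_range_add_finrank_ker C.mulVecLin).trans (finrank_fintype_fun_eq_card K)

theorem dotProduct_self_pos {x : ι → ℝ} (hx : x ≠ 0) : 0 < x ⬝ᵥ x := by
  simpa using dotProduct_self_star_pos_iff.mpr hx

variable [DecidableEq ι] {A : Matrix ι ι ℝ}

namespace IsHermitian

theorem dotProduct_mulVec_eq_sum (hA : A.IsHermitian) (x : ι → ℝ) :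
    x ⬝ᵥ A *ᵥ x = ∑ i, hA.eigenvalues i * (⇑(hA.eigenvectorBasis i) ⬝ᵥ x) ^ 2 := by
  have := hA.eigenvectorBasis.sum_inner_mul_inner (WithLp.toLp 2 x) (WithLp.toLp 2 (A *ᵥ x))
  simp only [EuclideanSpace.inner_eq_star_dotProduct, star_trivial] at this
  rw [dotProduct_comm, ← this]
  refine sum_congr rfl fun i _ => ?_
  rw [dotProduct_comm (A *ᵥ x), dotProduct_mulVec, ← mulVec_transpose,
    (isHermitian_iff_isSymm.mp hA).eq, hA.mulVec_eigenvectorBasis, smul_dotProduct, smul_eq_mul]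
  ring

theorem dotProduct_mulVec_le (hA : A.IsHermitian) {c : ℝ} (hc : ∀ i, hA.eigenvalues i ≤ c)
    (x : ι → ℝ) : x ⬝ᵥ A *ᵥ x ≤ c * (x ⬝ᵥ x) := by
  rw [hA.dotProduct_mulVec_eq_sum, ← hA.eigenvectorBasis.sum_sq_dotProduct, mul_sum]
  gcongr with i
  exact hc i

theorem le_dotProduct_mulVec (hA : A.IsHermitian) {c : ℝ} {x : ι → ℝ}
    (hx : ∀ i, hA.eigenvalues i < c → ⇑(hA.eigenvectorBasis i) ⬝ᵥ x = 0) :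
    c * (x ⬝ᵥ x) ≤ x ⬝ᵥ A *ᵥ x := by
  rw [hA.dotProduct_mulVec_eq_sum, ← hA.eigenvectorBasis.sum_sq_dotProduct, mul_sum]
  refine sum_le_sum fun i _ => ?_
  rcases lt_or_ge (hA.eigenvalues i) c with hi | hi
  · simp [hx i hi]
  · gcongr

theorem exists_ne_zero_mem_le_dotProduct_mulVec (hA : A.IsHermitian) (K : Submodule ℝ (ι → ℝ))
    {c : ℝ} (hK : #{i | hA.eigenvalues i < c} < finrank ℝ K) :
    ∃ x ∈ K, x ≠ 0 ∧ c * (x ⬝ᵥ x) ≤ x ⬝ᵥ A *ᵥ x := by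
  let P : Matrix {i // hA.eigenvalues i < c} ι ℝ := of fun i => ⇑(hA.eigenvectorBasis i)
  have hker : LinearMap.ker (P.mulVecLin ∘ₗ K.subtype) ≠ ⊥ :=
    LinearMap.ker_ne_bot_of_finrank_lt (by simpa [Fintype.card_subtype] using hK)
  obtain ⟨⟨x, hxK⟩, hPx, hx0⟩ := Submodule.exists_mem_ne_zero_of_ne_bot hker
  refine ⟨x, hxK, fun h => hx0 (Subtype.ext h), hA.le_dotProduct_mulVec fun i hi => ?_⟩
  exact congrFun hPx ⟨i, hi⟩

end IsHermitian

end Matrix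

theorem sv_nonneg {m n : ℕ} (B : Matrix (Fin m) (Fin n) ℝ) (k : ℕ) : 0 ≤ sv B k := by
  unfold sv
  split_ifs
  exacts [Real.sqrt_nonneg _, le_rfl]

/-- For any matrix `C` of rank at most `k`, the largest singular value of the residual
satisfies `σ₁(B − C) ≥ σ_{k+1}(B)` (0-indexed: `sv (B - C) 0 ≥ sv B k`). -/
theorem residual_opnorm_ge_singular_value {m n : ℕ} (B C : Matrix (Fin m) (Fin n) ℝ)
    (k : ℕ) (hC : C.rank ≤ k) :
    sv (B - C) 0 ≥ sv B k := by
  by_cases hk : k < n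
  swap
  · rw [ge_iff_le, sv, dif_neg hk]
    exact sv_nonneg _ _
  have hn : 0 < n := by omega
  set hB := isHermitian_transpose_mul_self B
  set hR := isHermitian_transpose_mul_self (B - C)
  set c := (hB.eigenvalues ∘ Tuple.sort hB.eigenvalues) (Fin.rev ⟨k, hk⟩)
  set d := (hR.eigenvalues ∘ Tuple.sort hR.eigenvalues) (Fin.rev ⟨0, hn⟩)
  have hker : n - k ≤ finrank ℝ (LinearMap.ker C.mulVecLin) := by
    have := C.rank_add_finrank_ker_mulVecLin
    rw [Fintype.card_fin] at this
    omega
  have hcount : #{i | hB.eigenvalues i < c} < finrank ℝ (LinearMap.ker C.mulVecLin) :=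
    (Tuple.card_filter_lt_comp_sort_le _ _).trans_lt (by simp only [Fin.val_rev]; omega)
  obtain ⟨x, hCx, hx0, hcx⟩ := hB.exists_ne_zero_mem_le_dotProduct_mulVec _ hcount
  have hcd : c * (x ⬝ᵥ x) ≤ d * (x ⬝ᵥ x) :=
    calc c * (x ⬝ᵥ x) ≤ x ⬝ᵥ (Bᵀ * B) *ᵥ x := hcx
      _ = x ⬝ᵥ ((B - C)ᵀ * (B - C)) *ᵥ x := by
        rw [dotProduct_mulVec_transpose_mul_self, dotProduct_mulVec_transpose_mul_self,
          sub_mulVec, show C *ᵥ x = 0 from hCx, sub_zero]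
      _ ≤ d * (x ⬝ᵥ x) := hR.dotProduct_mulVec_le (Tuple.le_comp_sort_rev_zero _ hn) x
  rw [ge_iff_le, sv, sv, dif_pos hk, dif_pos hn]
  exact Real.sqrt_le_sqrt (le_of_mul_le_mul_right hcd (dotProduct_self_pos hx0))
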